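/- arXiv:2602.00620 — 4 statements merged into one kernel-verified Lean document; each statement's English description precedes it below -/
import Mathlib

section
/- Let q, n be positive natural numbers and η > 0. There exist square matrices Q, K, V, P of size (q+1)×(q+1) with the following property. For all context tokens x_i = (z_i, e_i) ∈ ℝ^{q+1} (i = 1, ..., n), where z_i ∈ ℝ^q occupies the first q coordinates and e_i ∈ ℝ the last coordinate, and for every query token x̃ = (z, ŷ) ∈ ℝ^{q+1}, the linear-attention output out(x̃) = x̃ + P · ( Σ_{i=1}^n ⟨Q x̃, K x_i⟩ · (V x_i) ) satisfies: its first q coordinates equal z, and its last coordinate equals ŷ - (η/n) · Σ_{i=1}^n e_i · ⟨z_i, z⟩. In other words, one linear-attention block exactly implements one prediction-space gradient-descent update on the label slot of every query token. -/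
open Matrix

/-- There exist projection matrices `Q, K, V` and output matrix `P`
of size `(q+1)×(q+1)` such that for all context tokens `xᵢ = (zᵢ, eᵢ)` and every query
token `x̃ = (z, yhat)`, the linear-attention output
`out(x̃) = x̃ + P (Σᵢ ⟨Q x̃, K xᵢ⟩ (V xᵢ))` keeps the first `q` coordinates equal to `z`
and sets the last coordinate to `yhat - (η/n) Σᵢ eᵢ ⟨zᵢ, z⟩`: one linear-attention block
implements one prediction-space gradient-descent update on the label slot. -/
theorem linear_attention_implements_gd_update
    (q n : ℕ) (hq : 0 < q) (hn : 0 < n) (η : ℝ) (hη : 0 < η) :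
    ∃ Q K V P : Matrix (Fin (q + 1)) (Fin (q + 1)) ℝ,
      ∀ (z : Fin n → (Fin q → ℝ)) (e : Fin n → ℝ) (zq : Fin q → ℝ) (yhat : ℝ),
        let x : Fin n → (Fin (q + 1) → ℝ) := fun i => Fin.snoc (z i) (e i)
        let xq : Fin (q + 1) → ℝ := Fin.snoc zq yhat
        let out : Fin (q + 1) → ℝ :=
          xq + P.mulVec (∑ i, ((Q.mulVec xq) ⬝ᵥ (K.mulVec (x i))) • (V.mulVec (x i)))
        (∀ j : Fin q, out (Fin.castSucc j) = zq j) ∧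
        out (Fin.last q) = yhat - (η / n) * ∑ i, e i * (z i ⬝ᵥ zq) := by
  classical
  set dQ : Fin (q + 1) → ℝ := fun j => if j = Fin.last q then 0 else 1 with hdQ
  set dV : Fin (q + 1) → ℝ := fun j => if j = Fin.last q then 1 else 0 with hdV
  set dP : Fin (q + 1) → ℝ := fun j => if j = Fin.last q then -(η / n) else 0 with hdP
  refine ⟨Matrix.diagonal dQ, Matrix.diagonal dQ, Matrix.diagonal dV,
    Matrix.diagonal dP, ?_⟩
  intro z e zq yhat x xq out
  -- weight of token i
  have hw : ∀ i, ((Matrix.diagonal dQ).mulVec xq ⬝ᵥ (Matrix.diagonal dQ).mulVec (x i))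
      = z i ⬝ᵥ zq := by
    intro i
    simp only [Matrix.mulVec_diagonal, dotProduct, x, xq]
    rw [Fin.sum_univ_castSucc]
    simp only [dQ, Fin.snoc_castSucc, Fin.snoc_last, dotProduct, if_pos rfl,
      zero_mul, mul_zero, add_zero]
    refine Finset.sum_congr rfl fun j _ => ?_
    rw [if_neg (Fin.castSucc_lt_last j).ne]
    ring
  have hsum : ∀ j, (∑ i, ((Matrix.diagonal dQ).mulVec xq ⬝ᵥ
        (Matrix.diagonal dQ).mulVec (x i)) • (Matrix.diagonal dV).mulVec (x i)) j
      = if j = Fin.last q then ∑ i, (z i ⬝ᵥ zq) * e i else 0 := by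
    intro j
    rw [Finset.sum_apply]
    by_cases hj : j = Fin.last q
    · subst hj
      rw [if_pos rfl]
      refine Finset.sum_congr rfl fun i _ => ?_
      simp [hw i, Matrix.mulVec_diagonal, dV, x, Fin.snoc_last]
    · simp [Matrix.mulVec_diagonal, dV, hj]
  constructor
  · intro j
    have hjne : Fin.castSucc j ≠ Fin.last q := Fin.castSucc_lt_last j |>.ne
    simp only [out, Pi.add_apply, Matrix.mulVec_diagonal, hsum, dP, hjne, if_neg hjne,
      xq, Fin.snoc_castSucc]
    simp
  · simp only [out, Pi.add_apply, Matrix.mulVec_diagonal, hsum, dP, if_pos rfl,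
      xq, Fin.snoc_last, if_true]
    rw [sub_eq_add_neg]
    congr 1
    have hc : (∑ i, z i ⬝ᵥ zq * e i) = ∑ i, e i * (z i ⬝ᵥ zq) :=
      Finset.sum_congr rfl fun i _ => mul_comm _ _
    rw [hc, neg_mul]
end

section
/- Let q, n be positive natural numbers and η > 0. There exist square matrices Q, K, V, P of size (q+1)×(q+1) with the following property. For all training pairs (z_i, y_i) ∈ ℝ^q × ℝ (i = 1, ..., n) encoded as context tokens x_i = (z_i, y_i) ∈ ℝ^{q+1}, and for every query embedding z ∈ ℝ^q encoded as query token x̃ = (z, 0) ∈ ℝ^{q+1}, the linear-attention output out(x̃) = x̃ + P · ( Σ_{i=1}^n ⟨Q x̃, K x_i⟩ · (V x_i) ) has last coordinate equal to (η/n) · Σ_{i=1}^n y_i · ⟨z_i, z⟩, which is the prediction ⟨w^(1), z⟩ of one step of gradient descent with step size η on the squared loss ℓ(w) = (1/(2n)) · Σ_{i=1}^n (⟨w, z_i⟩ - y_i)^2 initialized at w^(0) = 0. -/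
/-!
At `w = 0` the gradient of the squared loss is `-(1/n) ∑ᵢ yᵢ zᵢ`, so one gradient step predicts
`(η/n) ∑ᵢ yᵢ ⟨zᵢ, z⟩`. Linear attention produces exactly this with `Q = K = V = 1` and
`P = (η/n) • 1`: because the query token `(z, 0)` has last coordinate `0`, the attention score
`⟨x̃, xᵢ⟩` is `⟨z, zᵢ⟩`, and the value `xᵢ` carries `yᵢ` in its last coordinate.
-/

open Matrix InnerProductSpace

section GradientDescent

variable {E ι : Type*} [NormedAddCommGroup E] [InnerProductSpace ℝ E] [CompleteSpace E]
  [Fintype ι]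

theorem hasGradientAt_const_mul_sum_inner_sub_sq (c : ℝ) (z : ι → E) (y : ι → ℝ) (w : E) :
    HasGradientAt (fun v => c * ∑ i, (inner ℝ v (z i) - y i) ^ 2)
      (∑ i, (2 * c * (inner ℝ w (z i) - y i)) • z i) w := by
  have hresidual (i : ι) :
      HasFDerivAt (fun v => inner ℝ v (z i) - y i) (innerSL ℝ (z i)) w := by
    have h : HasFDerivAt (fun v => inner ℝ (z i) v - y i) (innerSL ℝ (z i)) w :=
      (innerSL ℝ (z i)).hasFDerivAt.sub_const (y i)
    simpa only [real_inner_comm (z i)] using h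
  have hloss :=
    (HasFDerivAt.fun_sum (u := Finset.univ) fun i _ => (hresidual i).pow 2).const_mul c
  rw [hasGradientAt_iff_hasFDerivAt]
  refine hloss.congr_fderiv ?_
  ext v
  simp only [Nat.add_one_sub_one, pow_one, nsmul_eq_mul, Nat.cast_ofNat, _root_.smul_apply,
    _root_.sum_apply, coe_innerSL_apply, real_inner_comm, smul_eq_mul, Finset.mul_sum, map_sum,
    map_smul, toDual_apply_apply]
  exact Finset.sum_congr rfl fun i _ => by ring

theorem inner_zero_sub_smul_gradient_const_mul_sum_inner_sub_sq (c η : ℝ) (z : ι → E)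
    (y : ι → ℝ) (u : E) :
    inner ℝ ((0 : E) - η • gradient (fun v => c * ∑ i, (inner ℝ v (z i) - y i) ^ 2) 0) u =
      2 * c * η * ∑ i, y i * inner ℝ (z i) u := by
  rw [(hasGradientAt_const_mul_sum_inner_sub_sq c z y 0).gradient]
  simp only [inner_zero_left, zero_sub, inner_neg_left, real_inner_smul_left, sum_inner,
    Finset.mul_sum, ← Finset.sum_neg_distrib]
  exact Finset.sum_congr rfl fun i _ => by ring

end GradientDescent

section LinearAttention

variable {R : Type*} [CommSemiring R]

theorem Fin.snoc_dotProduct_snoc {m : ℕ} (a b : Fin m → R) (s t : R) :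
    (Fin.snoc a s : Fin (m + 1) → R) ⬝ᵥ Fin.snoc b t = a ⬝ᵥ b + s * t := by
  simp [dotProduct, Fin.sum_univ_castSucc]

def linearAttention {ι : Type*} [Fintype ι] {n : ℕ} (Q K V P : Matrix ι ι R)
    (x : Fin n → ι → R) (xq : ι → R) : ι → R :=
  xq + P *ᵥ ∑ i, ((Q *ᵥ xq) ⬝ᵥ (K *ᵥ x i)) • (V *ᵥ x i)

theorem linearAttention_one_one_one_smul_one_last {m n : ℕ} (c : R) (a : Fin m → R)
    (b : Fin n → Fin m → R) (s : Fin n → R) :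
    linearAttention 1 1 1 (c • 1) (fun i => Fin.snoc (b i) (s i)) (Fin.snoc a 0) (Fin.last m) =
      c * ∑ i, s i * (a ⬝ᵥ b i) := by
  simp only [linearAttention, one_mulVec, Fin.snoc_dotProduct_snoc, mul_zero, add_zero,
    Pi.add_apply, Fin.snoc_last, zero_add, smul_mulVec, Pi.smul_apply, Finset.sum_apply,
    smul_eq_mul, mul_comm]

end LinearAttention

theorem linear_attention_one_step_gd_general
    (q n : ℕ) (η : ℝ) :
    ∃ Q K V P : Matrix (Fin (q + 1)) (Fin (q + 1)) ℝ,
      ∀ (z : Fin n → EuclideanSpace ℝ (Fin q)) (y : Fin n → ℝ)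
        (zq : EuclideanSpace ℝ (Fin q)),
        let x : Fin n → (Fin (q + 1) → ℝ) := fun i => Fin.snoc (fun j => z i j) (y i)
        let xq : Fin (q + 1) → ℝ := Fin.snoc (fun j => zq j) 0
        let out : Fin (q + 1) → ℝ :=
          xq + P.mulVec (∑ i, ((Q.mulVec xq) ⬝ᵥ (K.mulVec (x i))) • (V.mulVec (x i)))
        out (Fin.last q) = (η / n) * ∑ i, y i * (inner ℝ (z i) zq : ℝ) ∧
        out (Fin.last q) =
          (inner ℝ ((0 : EuclideanSpace ℝ (Fin q)) - η • gradient
            (fun w : EuclideanSpace ℝ (Fin q) =>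
              (1 / (2 * (n : ℝ))) * ∑ i, ((inner ℝ w (z i) : ℝ) - y i) ^ 2)
            (0 : EuclideanSpace ℝ (Fin q))) zq : ℝ) := by
  refine ⟨1, 1, 1, (η / n) • 1, fun z y zq => ?_⟩
  have hattention : linearAttention 1 1 1 ((η / n) • 1) (fun i => Fin.snoc (fun j => z i j) (y i))
      (Fin.snoc (fun j => zq j) 0) (Fin.last q) = η / n * ∑ i, y i * inner ℝ (z i) zq := by
    simpa only [EuclideanSpace.inner_eq_star_dotProduct, star_trivial] using
      linearAttention_one_one_one_smul_one_last (η / n) (fun j => zq j) (fun i j => z i j) y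
  refine ⟨hattention, hattention.trans ?_⟩
  rw [inner_zero_sub_smul_gradient_const_mul_sum_inner_sub_sq]
  ring

/-- There exist matrices `Q, K, V, P` of size `(q+1)×(q+1)` such that
for all training pairs `(zᵢ, yᵢ)` encoded as context tokens `xᵢ = (zᵢ, yᵢ)` and every
query embedding `z` encoded as `x̃ = (z, 0)`, the linear-attention output has last
coordinate `(η/n) Σᵢ yᵢ ⟨zᵢ, z⟩`, which equals the prediction `⟨w⁽¹⁾, z⟩` of one step
of gradient descent on the squared loss initialized at `w⁽⁰⁾ = 0`. -/
theorem linear_attention_one_step_gd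
    (q n : ℕ) (hq : 0 < q) (hn : 0 < n) (η : ℝ) (hη : 0 < η) :
    ∃ Q K V P : Matrix (Fin (q + 1)) (Fin (q + 1)) ℝ,
      ∀ (z : Fin n → EuclideanSpace ℝ (Fin q)) (y : Fin n → ℝ)
        (zq : EuclideanSpace ℝ (Fin q)),
        let x : Fin n → (Fin (q + 1) → ℝ) := fun i => Fin.snoc (fun j => z i j) (y i)
        let xq : Fin (q + 1) → ℝ := Fin.snoc (fun j => zq j) 0
        let out : Fin (q + 1) → ℝ :=
          xq + P.mulVec (∑ i, ((Q.mulVec xq) ⬝ᵥ (K.mulVec (x i))) • (V.mulVec (x i)))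
        out (Fin.last q) = (η / n) * ∑ i, y i * (inner ℝ (z i) zq : ℝ) ∧
        out (Fin.last q) =
          (inner ℝ ((0 : EuclideanSpace ℝ (Fin q)) - η • gradient
            (fun w : EuclideanSpace ℝ (Fin q) =>
              (1 / (2 * (n : ℝ))) * ∑ i, ((inner ℝ w (z i) : ℝ) - y i) ^ 2)
            (0 : EuclideanSpace ℝ (Fin q))) zq : ℝ) :=
  linear_attention_one_step_gd_general q n η
end

section
/- Fix positive naturals d, N, M. Let P be a real polynomial function on (ℝ^d)^N × (ℝ^d)^M that is invariant under permutations of the N training blocks. Then there exist a natural number s, monomial functions m_1, ..., m_s on ℝ^d (each of the form u ↦ Π_{j=1}^d u_j^{α_j} for some multi-index α ∈ ℕ^d), and a real polynomial function Q on ℝ^s × (ℝ^d)^M, such that for all (u_1, ..., u_N, V) ∈ (ℝ^d)^N × (ℝ^d)^M: P(u_1, ..., u_N, V) = Q( Σ_{i=1}^N m_1(u_i), ..., Σ_{i=1}^N m_s(u_i), V ). That is, every block-symmetric polynomial is a polynomial in finitely many monomial power-sum aggregates of the training blocks together with the test variables. -/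
/-!
Averaging `P` over `S_N` writes it as a linear combination of products `Sym(L)(u) · V^T`, where
`Sym(L)(u) = ∑_π ∏_i u_{π i}^{L i}` is the symmetrization of the block monomial with row
exponents `L`. Each `Sym(L)` is a polynomial in the power sums `p_β(u) = ∑_i u_i^β`, by induction
on the rows where `L` is nonzero: if `L₀` vanishes at row `i₀`, then
`p_β · Sym(L₀) = ∑_t Sym(L₀ + β e_t)`, where the terms with `L₀ t = 0` all equal
`Sym(L₀ + β e_{i₀})` and the others have the same nonzero rows as `L₀`. Dividing by the number of
such terms needs characteristic zero. Only finitely many power sums occur in the resulting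
expression of `P`, and their exponents give the monomials `m_r`.
-/

/-- The action of `π ∈ S_N` on `(ℝ^d)^N × (ℝ^d)^M` permuting the `N` training blocks. -/
def blockPerm (d N M : ℕ) (π : Equiv.Perm (Fin N))
    (x : (Fin N → Fin d → ℝ) × (Fin M → Fin d → ℝ)) :
    (Fin N → Fin d → ℝ) × (Fin M → Fin d → ℝ) :=
  (fun i => x.1 (π⁻¹ i), x.2)

/-- A function on `(ℝ^d)^N × (ℝ^d)^M` is a polynomial function if it is the evaluation
of a multivariate polynomial in the `N·d + M·d` real coordinates. -/
def IsPolyFun (d N M : ℕ)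
    (f : (Fin N → Fin d → ℝ) × (Fin M → Fin d → ℝ) → ℝ) : Prop :=
  ∃ p : MvPolynomial ((Fin N × Fin d) ⊕ (Fin M × Fin d)) ℝ,
    ∀ x, f x = MvPolynomial.eval
      (Sum.elim (fun ij => x.1 ij.1 ij.2) (fun ij => x.2 ij.1 ij.2)) p

/-- A function on `ℝ^s × (ℝ^d)^M` is a polynomial function if it is the evaluation of a
multivariate polynomial in the `s + M·d` real coordinates. -/
def IsPolyFunAgg (d M s : ℕ)
    (f : (Fin s → ℝ) × (Fin M → Fin d → ℝ) → ℝ) : Prop :=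
  ∃ p : MvPolynomial (Fin s ⊕ (Fin M × Fin d)) ℝ,
    ∀ x, f x = MvPolynomial.eval (Sum.elim x.1 (fun ij => x.2 ij.1 ij.2)) p

open MvPolynomial Finset

theorem exists_eval_eq_of_mem_adjoin_range_sumElim {K X σ ν : Type*} [CommRing K]
    {g : σ → X → K} {h : ν → X → K} {f : X → K}
    (hf : f ∈ Algebra.adjoin K (Set.range (Sum.elim g h))) :
    ∃ (s : ℕ) (e : Fin s → σ) (q : MvPolynomial (Fin s ⊕ ν) K),
      ∀ x, f x = eval (Sum.elim (fun r => g (e r) x) (fun v => h v x)) q := by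
  rw [Algebra.adjoin_range_eq_range_aeval] at hf
  obtain ⟨p, rfl⟩ := hf
  let S : Finset σ := p.vars.toLeft
  let e : Fin S.card → σ := (↑) ∘ S.equivFin.symm
  have he : Function.Injective e := Subtype.val_injective.comp S.equivFin.symm.injective
  obtain ⟨q, hq⟩ := p.exists_rename_eq_of_vars_subset_range (Sum.map e (id : ν → ν))
    (he.sumMap Function.injective_id) (by
      rintro (a | b) hv
      · exact ⟨.inl (S.equivFin ⟨a, by simpa [S] using hv⟩), by simp [e]⟩
      · exact ⟨.inr b, rfl⟩)
  refine ⟨S.card, e, q, fun x => ?_⟩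
  rw [← hq, AlgHom.toRingHom_eq_coe, RingHom.coe_coe, aeval_rename, Sum.elim_comp_map,
    Function.comp_id, ← Pi.evalAlgHom_apply K (fun _ => K) x (aeval _ q), comp_aeval_apply,
    aeval_eq_eval]
  congr 2
  ext (r | v) <;> rfl

namespace BlockSymmetric

lemma add_single_eq_comp_swap {ι κ : Type*} [DecidableEq ι] {L : ι → κ → ℕ} {i₀ t : ι}
    (hi₀ : L i₀ = 0) (ht : L t = 0) (β : κ → ℕ) :
    L + Pi.single t β = (L + Pi.single i₀ β) ∘ Equiv.swap i₀ t := by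
  ext i : 1
  rcases eq_or_ne i t with rfl | hit
  · simp [hi₀, ht]
  rcases eq_or_ne i i₀ with rfl | hii
  · simp [hi₀, ht, hit]
  · simp [Equiv.swap_apply_of_ne_of_ne hii hit, hit, hii]

section CommMonoid

variable {K κ : Type*} [CommMonoid K] [Fintype κ]

def monomialFun (α : κ → ℕ) (v : κ → K) : K := ∏ j, v j ^ α j

@[simp]
lemma monomialFun_zero (v : κ → K) : monomialFun 0 v = 1 := by
  simp [monomialFun]

lemma monomialFun_add (α β : κ → ℕ) (v : κ → K) :
    monomialFun (α + β) v = monomialFun α v * monomialFun β v := by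
  simp only [monomialFun, Pi.add_apply, pow_add, prod_mul_distrib]

end CommMonoid

section CommRing

variable {K ι κ : Type*} [CommRing K] [Fintype ι] [Fintype κ]

variable (K ι) in
def powerSum (α : κ → ℕ) (u : ι → κ → K) : K := ∑ i, monomialFun α (u i)

def blockMonomial (L : ι → κ → ℕ) (u : ι → κ → K) : K := ∏ i, monomialFun (L i) (u i)

lemma blockMonomial_add (L L' : ι → κ → ℕ) (u : ι → κ → K) :
    blockMonomial (L + L') u = blockMonomial L u * blockMonomial L' u := by
  simp only [blockMonomial, Pi.add_apply, monomialFun_add, prod_mul_distrib]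

lemma blockMonomial_comp_perm (L : ι → κ → ℕ) (u : ι → κ → K) (σ : Equiv.Perm ι) :
    blockMonomial (L ∘ σ) (u ∘ σ) = blockMonomial L u :=
  Equiv.prod_comp σ fun i => monomialFun (L i) (u i)

section Symmetrization

variable [DecidableEq ι]

def symmetrizedMonomial (L : ι → κ → ℕ) (u : ι → κ → K) : K :=
  ∑ π : Equiv.Perm ι, blockMonomial L (u ∘ π)

lemma blockMonomial_single (t : ι) (β : κ → ℕ) (u : ι → κ → K) :
    blockMonomial (Pi.single t β) u = monomialFun β (u t) := by
  rw [blockMonomial, Fintype.prod_eq_single t fun i hi => by simp [hi]]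
  simp

lemma symmetrizedMonomial_zero :
    symmetrizedMonomial (0 : ι → κ → ℕ) = (Fintype.card (Equiv.Perm ι) : (ι → κ → K) → K) := by
  ext u
  simp [symmetrizedMonomial, blockMonomial]

lemma symmetrizedMonomial_comp_perm (L : ι → κ → ℕ) (σ : Equiv.Perm ι) :
    symmetrizedMonomial (K := K) (L ∘ σ) = symmetrizedMonomial L := by
  ext u
  refine Fintype.sum_equiv (Equiv.mulRight σ⁻¹) _ _ fun π => ?_
  rw [← blockMonomial_comp_perm L _ σ]
  congr 1
  ext i : 1
  simp

lemma powerSum_mul_symmetrizedMonomial (β : κ → ℕ) (L : ι → κ → ℕ) :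
    powerSum K ι β * symmetrizedMonomial L = ∑ t, symmetrizedMonomial (L + Pi.single t β) := by
  ext u
  simp only [Pi.mul_apply, Finset.sum_apply, symmetrizedMonomial, mul_sum]
  rw [sum_comm]
  refine sum_congr rfl fun π _ => ?_
  have hπ : powerSum K ι β u = powerSum K ι β (u ∘ π) := (Equiv.sum_comp π _).symm
  rw [hπ]
  simp only [powerSum, sum_mul, blockMonomial_add, blockMonomial_single]
  exact sum_congr rfl fun _ _ => mul_comm _ _

lemma card_smul_symmetrizedMonomial_add_single {L : ι → κ → ℕ} {i₀ : ι} (hi₀ : L i₀ = 0)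
    (β : κ → ℕ) :
    (#{t | L t = 0} : K) • symmetrizedMonomial (L + Pi.single i₀ β) =
      powerSum K ι β * symmetrizedMonomial L -
        ∑ t with L t ≠ 0, symmetrizedMonomial (L + Pi.single t β) := by
  rw [powerSum_mul_symmetrizedMonomial, ← sum_filter_add_sum_filter_not univ (L · = 0),
    add_sub_cancel_right, sum_congr rfl fun t ht => by
      rw [add_single_eq_comp_swap hi₀ (mem_filter.1 ht).2, symmetrizedMonomial_comp_perm],
    sum_const, Nat.cast_smul_eq_nsmul]

end Symmetrization

variable {μ : Type*}

variable (K ι κ μ) in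
def deepSetsGenerator : (κ → ℕ) ⊕ (μ × κ) → (ι → κ → K) × (μ → κ → K) → K :=
  Sum.elim (fun α x => powerSum K ι α x.1) (fun ij x => x.2 ij.1 ij.2)

variable [Fintype μ]

theorem blockMonomial_comp_snd_mem_adjoin (T : μ → κ → ℕ) :
    (fun x => blockMonomial T x.2) ∈
      Algebra.adjoin K (Set.range (deepSetsGenerator K ι κ μ)) := by
  have : (fun x => blockMonomial T x.2) =
      ∏ i, ∏ j, deepSetsGenerator K ι κ μ (.inr (i, j)) ^ T i j := by
    ext x
    simp [blockMonomial, monomialFun, deepSetsGenerator, Finset.prod_apply]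
  rw [this]
  exact prod_mem fun i _ => prod_mem fun j _ =>
    pow_mem (Algebra.subset_adjoin (Set.mem_range_self _)) _

theorem eval_sumElim_eq_sum_blockMonomial (p : MvPolynomial ((ι × κ) ⊕ (μ × κ)) K)
    (u : ι → κ → K) (w : μ → κ → K) :
    eval (Sum.elim (fun ij => u ij.1 ij.2) (fun ij => w ij.1 ij.2)) p =
      ∑ m ∈ p.support, coeff m p * (blockMonomial (fun i j => m (.inl (i, j))) u *
        blockMonomial (fun i j => m (.inr (i, j))) w) := by
  simp [eval_eq', Fintype.prod_sum_type, Fintype.prod_prod_type, blockMonomial, monomialFun]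

end CommRing

section Field

variable {K ι κ : Type*} [Field K] [CharZero K] [Fintype ι] [DecidableEq ι] [Fintype κ]
  {μ : Type*}

theorem symmetrizedMonomial_mem_adjoin (L : ι → κ → ℕ) :
    symmetrizedMonomial L ∈ Algebra.adjoin K (Set.range (powerSum K ι (κ := κ))) := by
  obtain ⟨S, hL⟩ : ∃ S : Finset ι, ∀ i ∉ S, L i = 0 := ⟨univ, by simp⟩
  induction S using Finset.induction_on generalizing L with
  | empty =>
    obtain rfl : L = 0 := funext fun i => hL i (notMem_empty i)
    rw [symmetrizedMonomial_zero]
    exact Subalgebra.natCast_mem _ _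
  | insert i₀ S _ ih =>
    set L₀ := Function.update L i₀ 0
    have hL₀ : ∀ i ∉ S, L₀ i = 0 := fun i hi => by
      rcases eq_or_ne i i₀ with rfl | h
      · simp [L₀]
      · simpa [L₀, h] using hL i (by simp [h, hi])
    have hsplit : L = L₀ + Pi.single i₀ (L i₀) := by
      ext i : 1
      rcases eq_or_ne i i₀ with rfl | h <;> simp [L₀, *]
    have hcard : (#{t | L₀ t = 0} : K) ≠ 0 :=
      Nat.cast_ne_zero.2 (card_ne_zero_of_mem (a := i₀) (by simp [L₀]))
    rw [hsplit, ← inv_smul_smul₀ hcard (symmetrizedMonomial _),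
      card_smul_symmetrizedMonomial_add_single (by simp [L₀])]
    refine Subalgebra.smul_mem _ (sub_mem (mul_mem (Algebra.subset_adjoin (Set.mem_range_self _))
      (ih L₀ hL₀)) (sum_mem fun t ht => ih _ fun i hi => ?_)) _
    have hit : i ≠ t := by rintro rfl; exact (mem_filter.1 ht).2 (hL₀ i hi)
    simp [hL₀ i hi, hit]

theorem symmetrizedMonomial_comp_fst_mem_adjoin (L : ι → κ → ℕ) :
    (fun x => symmetrizedMonomial L x.1) ∈
      Algebra.adjoin K (Set.range (deepSetsGenerator K ι κ μ)) := by
  let precompFst : ((ι → κ → K) → K) →ₐ[K] (ι → κ → K) × (μ → κ → K) → K :=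
    AlgHom.pi fun x => Pi.evalAlgHom K _ x.1
  refine Algebra.adjoin_le (S := (Algebra.adjoin K _).comap precompFst) ?_
    (symmetrizedMonomial_mem_adjoin L)
  rintro _ ⟨α, rfl⟩
  exact Algebra.subset_adjoin ⟨.inl α, rfl⟩

variable [Fintype μ]

theorem mem_adjoin_deepSetsGenerator_of_perm_invariant (f : (ι → κ → K) × (μ → κ → K) → K)
    (p : MvPolynomial ((ι × κ) ⊕ (μ × κ)) K)
    (hp : ∀ x, f x = eval (Sum.elim (fun ij => x.1 ij.1 ij.2) (fun ij => x.2 ij.1 ij.2)) p)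
    (hinv : ∀ (π : Equiv.Perm ι) x, f (x.1 ∘ π, x.2) = f x) :
    f ∈ Algebra.adjoin K (Set.range (deepSetsGenerator K ι κ μ)) := by
  have hcard : (Fintype.card (Equiv.Perm ι) : K) ≠ 0 := Nat.cast_ne_zero.2 Fintype.card_ne_zero
  have hf : f = (Fintype.card (Equiv.Perm ι) : K)⁻¹ • ∑ m ∈ p.support, coeff m p •
      ((fun x => symmetrizedMonomial (fun i j => m (.inl (i, j))) x.1) *
        fun x => blockMonomial (fun i j => m (.inr (i, j))) x.2) := by
    ext x
    rw [Pi.smul_apply, eq_inv_smul_iff₀ hcard]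
    calc (Fintype.card (Equiv.Perm ι) : K) • f x = ∑ π : Equiv.Perm ι, f (x.1 ∘ π, x.2) := by
          simp [hinv]
      _ = _ := by
          simp only [hp, eval_sumElim_eq_sum_blockMonomial, symmetrizedMonomial]
          rw [sum_comm]
          simp [sum_mul, mul_sum]
  rw [hf]
  exact Subalgebra.smul_mem _ (sum_mem fun m _ => Subalgebra.smul_mem _
    (mul_mem (symmetrizedMonomial_comp_fst_mem_adjoin _) (blockMonomial_comp_snd_mem_adjoin _)) _) _

end Field

end BlockSymmetric

open BlockSymmetric in
theorem block_symmetric_poly_deepsets_form_general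
    (d N M : ℕ)
    (P : (Fin N → Fin d → ℝ) × (Fin M → Fin d → ℝ) → ℝ)
    (hP : IsPolyFun d N M P)
    (hPinv : ∀ π : Equiv.Perm (Fin N), ∀ x, P (blockPerm d N M π x) = P x) :
    ∃ (s : ℕ) (m : Fin s → (Fin d → ℝ) → ℝ)
      (Q : (Fin s → ℝ) × (Fin M → Fin d → ℝ) → ℝ),
      (∀ r : Fin s, ∃ α : Fin d → ℕ, ∀ u : Fin d → ℝ, m r u = ∏ j, (u j) ^ (α j)) ∧
      IsPolyFunAgg d M s Q ∧
      (∀ x : (Fin N → Fin d → ℝ) × (Fin M → Fin d → ℝ),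
        P x = Q (fun r => ∑ i, m r (x.1 i), x.2)) := by
  obtain ⟨p, hp⟩ := hP
  have hP_mem := mem_adjoin_deepSetsGenerator_of_perm_invariant P p hp fun π x => by
    simpa [blockPerm, Function.comp_def] using hPinv π⁻¹ x
  obtain ⟨s, α, q, hq⟩ := exists_eval_eq_of_mem_adjoin_range_sumElim hP_mem
  refine ⟨s, fun r => monomialFun (α r), fun y => eval (Sum.elim y.1 fun ij => y.2 ij.1 ij.2) q,
    fun r => ⟨α r, fun _ => ?_⟩, ⟨q, fun _ => ?_⟩, fun x => ?_⟩
  · rfl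
  · rfl
  · exact hq x

/-- Every polynomial function on `(ℝ^d)^N × (ℝ^d)^M` that is invariant
under permutations of the `N` training blocks is a polynomial `Q` in finitely many
monomial power-sum aggregates `Σᵢ m_r(uᵢ)` of the training blocks together with the
test variables `V`, where each `m_r(u) = Π_j u_j^{α_r(j)}` is a monomial function. -/
theorem block_symmetric_poly_deepsets_form
    (d N M : ℕ) (hd : 0 < d) (hN : 0 < N) (hM : 0 < M)
    (P : (Fin N → Fin d → ℝ) × (Fin M → Fin d → ℝ) → ℝ)
    (hP : IsPolyFun d N M P)
    (hPinv : ∀ π : Equiv.Perm (Fin N), ∀ x, P (blockPerm d N M π x) = P x) :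
    ∃ (s : ℕ) (m : Fin s → (Fin d → ℝ) → ℝ)
      (Q : (Fin s → ℝ) × (Fin M → Fin d → ℝ) → ℝ),
      (∀ r : Fin s, ∃ α : Fin d → ℕ, ∀ u : Fin d → ℝ, m r u = ∏ j, (u j) ^ (α j)) ∧
      IsPolyFunAgg d M s Q ∧
      (∀ x : (Fin N → Fin d → ℝ) × (Fin M → Fin d → ℝ),
        P x = Q (fun r => ∑ i, m r (x.1 i), x.2)) :=
  block_symmetric_poly_deepsets_form_general d N M P hP hPinv
end

section
/- Fix positive naturals d, N, M. Let X ⊆ (ℝ^d)^N × (ℝ^d)^M be a compact set invariant under permutations of the N training blocks, and let h : X → ℝ be a continuous function invariant under permutations of the N training blocks. Then for every ε > 0 there exist a natural number s, a polynomial map φ : ℝ^d → ℝ^s whose components are monomial functions, and a polynomial function ρ : ℝ^s × (ℝ^d)^M → ℝ, such that sup_{(U,V) ∈ X} | h(U,V) - ρ( Σ_{i=1}^N φ(u_i), V ) | ≤ ε, where U = (u_1, ..., u_N). That is, every continuous block-invariant function on a compact invariant domain admits a uniform DeepSets-style approximation of the form ρ(Σ_i φ(u_i), V). -/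
namespace DeepSetsAux

open MvPolynomial

variable {d N M : ℕ}

/-- `F` has the DeepSets polynomial form `ρ (∑ᵢ φ(uᵢ), V)` globally. -/
def GoodF (d N M : ℕ) (F : (Fin N → Fin d → ℝ) × (Fin M → Fin d → ℝ) → ℝ) : Prop :=
  ∃ (s : ℕ) (φ : (Fin d → ℝ) → Fin s → ℝ)
    (ρ : (Fin s → ℝ) × (Fin M → Fin d → ℝ) → ℝ),
    (∀ r : Fin s, ∃ α : Fin d → ℕ, ∀ u : Fin d → ℝ, φ u r = ∏ j, (u j) ^ (α j)) ∧
    IsPolyFunAgg d M s ρ ∧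
    (∀ x, F x = ρ (fun r => ∑ i, φ (x.1 i) r, x.2))

lemma goodF_const (c : ℝ) : GoodF d N M (fun _ => c) :=
  ⟨0, fun _ => Fin.elim0, fun _ => c, fun r => r.elim0,
    ⟨C c, fun z => by simp⟩, fun x => rfl⟩

lemma goodF_coordV (k : Fin M) (j : Fin d) : GoodF d N M (fun x => x.2 k j) :=
  ⟨0, fun _ => Fin.elim0, fun z => z.2 k j, fun r => r.elim0,
    ⟨X (Sum.inr (k, j)), fun z => by simp⟩, fun x => rfl⟩

lemma goodF_powerSum (α : Fin d → ℕ) :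
    GoodF d N M (fun x => ∑ i, ∏ j, (x.1 i j) ^ α j) :=
  ⟨1, fun u _ => ∏ j, (u j) ^ α j, fun z => z.1 0, fun _ => ⟨α, fun u => rfl⟩,
    ⟨X (Sum.inl 0), fun z => by simp⟩, fun x => rfl⟩

lemma goodF_add {F G : (Fin N → Fin d → ℝ) × (Fin M → Fin d → ℝ) → ℝ}
    (hF : GoodF d N M F) (hG : GoodF d N M G) :
    GoodF d N M (fun x => F x + G x) := by
  obtain ⟨s₁, φ₁, ρ₁, hm₁, ⟨p₁, hp₁⟩, he₁⟩ := hF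
  obtain ⟨s₂, φ₂, ρ₂, hm₂, ⟨p₂, hp₂⟩, he₂⟩ := hG
  refine ⟨s₁ + s₂, fun u => Fin.append (φ₁ u) (φ₂ u),
    fun z => ρ₁ (fun r => z.1 (Fin.castAdd s₂ r), z.2) +
      ρ₂ (fun r => z.1 (Fin.natAdd s₁ r), z.2), ?_, ?_, ?_⟩
  · intro r
    induction r using Fin.addCases with
    | left i =>
        obtain ⟨α, hα⟩ := hm₁ i
        exact ⟨α, fun u => (Fin.append_left _ _ _).trans (hα u)⟩
    | right i =>
        obtain ⟨α, hα⟩ := hm₂ i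
        exact ⟨α, fun u => (Fin.append_right _ _ _).trans (hα u)⟩
  · refine ⟨rename (Sum.map (Fin.castAdd s₂) id) p₁ +
      rename (Sum.map (Fin.natAdd s₁) id) p₂, fun z => ?_⟩
    have e₁ : (Sum.elim z.1 fun ij : Fin M × Fin d => z.2 ij.1 ij.2) ∘ Sum.map (Fin.castAdd s₂) id
        = Sum.elim (fun r => z.1 (Fin.castAdd s₂ r)) (fun ij : Fin M × Fin d => z.2 ij.1 ij.2) := by
      funext t; cases t <;> rfl
    have e₂ : (Sum.elim z.1 fun ij : Fin M × Fin d => z.2 ij.1 ij.2) ∘ Sum.map (Fin.natAdd s₁) id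
        = Sum.elim (fun r => z.1 (Fin.natAdd s₁ r)) (fun ij : Fin M × Fin d => z.2 ij.1 ij.2) := by
      funext t; cases t <;> rfl
    beta_reduce
    rw [hp₁, hp₂, map_add, eval_rename, eval_rename, e₁, e₂]
  · intro x
    simp only [he₁, he₂, Fin.append_left, Fin.append_right]

lemma goodF_mul {F G : (Fin N → Fin d → ℝ) × (Fin M → Fin d → ℝ) → ℝ}
    (hF : GoodF d N M F) (hG : GoodF d N M G) :
    GoodF d N M (fun x => F x * G x) := by
  obtain ⟨s₁, φ₁, ρ₁, hm₁, ⟨p₁, hp₁⟩, he₁⟩ := hF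
  obtain ⟨s₂, φ₂, ρ₂, hm₂, ⟨p₂, hp₂⟩, he₂⟩ := hG
  refine ⟨s₁ + s₂, fun u => Fin.append (φ₁ u) (φ₂ u),
    fun z => ρ₁ (fun r => z.1 (Fin.castAdd s₂ r), z.2) *
      ρ₂ (fun r => z.1 (Fin.natAdd s₁ r), z.2), ?_, ?_, ?_⟩
  · intro r
    induction r using Fin.addCases with
    | left i =>
        obtain ⟨α, hα⟩ := hm₁ i
        exact ⟨α, fun u => (Fin.append_left _ _ _).trans (hα u)⟩
    | right i =>
        obtain ⟨α, hα⟩ := hm₂ i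
        exact ⟨α, fun u => (Fin.append_right _ _ _).trans (hα u)⟩
  · refine ⟨rename (Sum.map (Fin.castAdd s₂) id) p₁ *
      rename (Sum.map (Fin.natAdd s₁) id) p₂, fun z => ?_⟩
    have e₁ : (Sum.elim z.1 fun ij : Fin M × Fin d => z.2 ij.1 ij.2) ∘ Sum.map (Fin.castAdd s₂) id
        = Sum.elim (fun r => z.1 (Fin.castAdd s₂ r)) (fun ij : Fin M × Fin d => z.2 ij.1 ij.2) := by
      funext t; cases t <;> rfl
    have e₂ : (Sum.elim z.1 fun ij : Fin M × Fin d => z.2 ij.1 ij.2) ∘ Sum.map (Fin.natAdd s₁) id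
        = Sum.elim (fun r => z.1 (Fin.natAdd s₁ r)) (fun ij : Fin M × Fin d => z.2 ij.1 ij.2) := by
      funext t; cases t <;> rfl
    beta_reduce
    rw [hp₁, hp₂, map_mul, eval_rename, eval_rename, e₁, e₂]
  · intro x
    simp only [he₁, he₂, Fin.append_left, Fin.append_right]

lemma goodF_sum {ι : Type*} (T : Finset ι)
    (g : ι → (Fin N → Fin d → ℝ) × (Fin M → Fin d → ℝ) → ℝ)
    (hg : ∀ t ∈ T, GoodF d N M (g t)) :
    GoodF d N M (fun x => ∑ t ∈ T, g t x) := by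
  classical
  induction T using Finset.induction_on with
  | empty => simpa using goodF_const (d := d) (N := N) (M := M) 0
  | @insert a T ha ih =>
      simp only [Finset.sum_insert ha]
      exact goodF_add (hg a (Finset.mem_insert_self a T))
        (ih fun t ht => hg t (Finset.mem_insert_of_mem ht))

lemma goodF_evalSum (f : MvPolynomial (Fin d) ℝ) :
    GoodF d N M (fun x => ∑ i, eval (x.1 i) f) := by
  have key : (fun x : (Fin N → Fin d → ℝ) × (Fin M → Fin d → ℝ) => ∑ i, eval (x.1 i) f)
      = fun x => ∑ α ∈ f.support, (coeff α f * ∑ i, ∏ j, (x.1 i j) ^ α j) := by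
    funext x
    simp only [eval_eq', Finset.mul_sum]
    rw [Finset.sum_comm]
  rw [key]
  exact goodF_sum _ _ fun α _ =>
    goodF_mul (goodF_const _) (goodF_powerSum fun j => α j)

lemma goodF_invariant {F : (Fin N → Fin d → ℝ) × (Fin M → Fin d → ℝ) → ℝ}
    (hF : GoodF d N M F) (π : Equiv.Perm (Fin N))
    (x : (Fin N → Fin d → ℝ) × (Fin M → Fin d → ℝ)) :
    F (blockPerm d N M π x) = F x := by
  obtain ⟨s, φ, ρ, -, -, he⟩ := hF
  rw [he, he]
  have : ∀ r, ∑ i, φ ((blockPerm d N M π x).1 i) r = ∑ i, φ (x.1 i) r := fun r =>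
    Equiv.sum_comp π⁻¹ (fun i => φ (x.1 i) r)
  rw [show (fun r => ∑ i, φ ((blockPerm d N M π x).1 i) r)
      = fun r => ∑ i, φ (x.1 i) r from funext this]
  rfl

lemma goodF_continuous {F : (Fin N → Fin d → ℝ) × (Fin M → Fin d → ℝ) → ℝ}
    (hF : GoodF d N M F) : Continuous F := by
  obtain ⟨s, φ, ρ, hm, ⟨p, hp⟩, he⟩ := hF
  have : F = fun x => eval (Sum.elim (fun r => ∑ i, φ (x.1 i) r)
      (fun ij => x.2 ij.1 ij.2)) p := by
    funext x; rw [he, hp]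
  rw [this]
  refine (MvPolynomial.continuous_eval p).comp ?_
  apply continuous_pi
  rintro (r | ⟨k, j⟩)
  · obtain ⟨α, hα⟩ := hm r
    simp only [Sum.elim_inl, hα]
    refine continuous_finset_sum _ fun i _ => continuous_finset_prod _ fun j _ => ?_
    exact ((continuous_apply j).comp ((continuous_apply i).comp continuous_fst)).pow _
  · exact (continuous_apply j).comp ((continuous_apply k).comp continuous_snd)

/-- Interpolation: a polynomial that is `1` at `u` and `0` on a finite set `T ∌ u`. -/
lemma exists_interp (T : Finset (Fin d → ℝ)) (u : Fin d → ℝ) (hu : u ∉ T) :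
    ∃ f : MvPolynomial (Fin d) ℝ, eval u f = 1 ∧ ∀ w ∈ T, eval w f = 0 := by
  refine ⟨∏ w ∈ T, (C (∑ j, (u j - w j) ^ 2)⁻¹ * ∑ j, (X j - C (w j)) ^ 2), ?_, ?_⟩
  · rw [map_prod]
    refine Finset.prod_eq_one fun w hw => ?_
    have hne : u ≠ w := fun e => hu (e ▸ hw)
    have hpos : 0 < ∑ j, (u j - w j) ^ 2 := by
      obtain ⟨j, hj⟩ : ∃ j, u j ≠ w j := by
        by_contra hc
        push_neg at hc
        exact hne (funext hc)
      refine Finset.sum_pos' (fun j _ => sq_nonneg _) ⟨j, Finset.mem_univ j, ?_⟩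
      exact pow_pos (abs_pos.mpr (sub_ne_zero_of_ne hj)) 2 |>.trans_le (by rw [sq_abs])
    simp only [map_mul, map_sum, map_sub, map_pow, eval_C, eval_X]
    rw [inv_mul_cancel₀ hpos.ne']
  · intro w hw
    rw [map_prod]
    refine Finset.prod_eq_zero hw ?_
    simp only [map_mul, map_sum, map_sub, map_pow, eval_C, eval_X]
    simp

lemma blockPerm_one (x : (Fin N → Fin d → ℝ) × (Fin M → Fin d → ℝ)) :
    blockPerm d N M 1 x = x := by
  cases x; simp [blockPerm]

lemma blockPerm_mul (π σ : Equiv.Perm (Fin N))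
    (x : (Fin N → Fin d → ℝ) × (Fin M → Fin d → ℝ)) :
    blockPerm d N M π (blockPerm d N M σ x) = blockPerm d N M (π * σ) x := by
  simp only [blockPerm, mul_inv_rev, Prod.mk.injEq]
  exact ⟨funext fun i => by simp [Equiv.Perm.mul_apply], trivial⟩

/-- The setoid on `X` identifying points in the same `S_N`-orbit. -/
def blockSetoid (d N M : ℕ) (X : Set ((Fin N → Fin d → ℝ) × (Fin M → Fin d → ℝ))) :
    Setoid X where
  r x y := ∃ π : Equiv.Perm (Fin N), blockPerm d N M π x.1 = y.1
  iseqv := by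
    refine ⟨fun x => ⟨1, blockPerm_one x.1⟩, ?_, ?_⟩
    · rintro x y ⟨π, hπ⟩
      exact ⟨π⁻¹, by rw [← hπ, blockPerm_mul, inv_mul_cancel, blockPerm_one]⟩
    · rintro x y z ⟨π, hπ⟩ ⟨σ, hσ⟩
      exact ⟨σ * π, by rw [← blockPerm_mul, hπ, hσ]⟩

/-- Descend a `GoodF` function to the quotient. -/
noncomputable def liftQ (d N M : ℕ) (X : Set ((Fin N → Fin d → ℝ) × (Fin M → Fin d → ℝ)))
    {F : (Fin N → Fin d → ℝ) × (Fin M → Fin d → ℝ) → ℝ} (hF : GoodF d N M F) :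
    C(Quotient (blockSetoid d N M X), ℝ) where
  toFun := Quotient.lift (fun x : X => F x.1)
    (fun a b hab => by
      obtain ⟨π, hπ⟩ := hab
      show F a.1 = F b.1
      rw [← hπ, goodF_invariant hF])
  continuous_toFun :=
    Continuous.quotient_lift ((goodF_continuous hF).comp continuous_subtype_val) _

/-- The subalgebra of descended `GoodF` functions. -/
noncomputable def algA (d N M : ℕ)
    (X : Set ((Fin N → Fin d → ℝ) × (Fin M → Fin d → ℝ))) :
    Subalgebra ℝ C(Quotient (blockSetoid d N M X), ℝ) where
  carrier := {g | ∃ F, ∃ hF : GoodF d N M F, g = liftQ d N M X hF}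
  mul_mem' := by
    rintro a b ⟨F, hF, rfl⟩ ⟨G, hG, rfl⟩
    refine ⟨fun x => F x * G x, goodF_mul hF hG, ?_⟩
    ext q
    induction q using Quotient.ind
    rfl
  add_mem' := by
    rintro a b ⟨F, hF, rfl⟩ ⟨G, hG, rfl⟩
    refine ⟨fun x => F x + G x, goodF_add hF hG, ?_⟩
    ext q
    induction q using Quotient.ind
    rfl
  one_mem' := ⟨fun _ => 1, goodF_const 1, by
    ext q; induction q using Quotient.ind; rfl⟩
  zero_mem' := ⟨fun _ => 0, goodF_const 0, by
    ext q; induction q using Quotient.ind; rfl⟩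
  algebraMap_mem' := fun c => ⟨fun _ => c, goodF_const c, by
    ext q; induction q using Quotient.ind; rfl⟩

/-- If two `N`-tuples are not related by a permutation, some polynomial power sum
separates them. -/
lemma exists_sep_poly (x y : Fin N → Fin d → ℝ)
    (hne : ¬ ∃ π : Equiv.Perm (Fin N), (fun i => x (π⁻¹ i)) = y) :
    ∃ f : MvPolynomial (Fin d) ℝ, ∑ i, eval (x i) f ≠ ∑ i, eval (y i) f := by
  classical
  by_contra hc
  push_neg at hc
  apply hne
  have hcount : ∀ u : Fin d → ℝ,
      (Finset.univ.filter (fun i => x i = u)).card =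
      (Finset.univ.filter (fun i => y i = u)).card := by
    intro u
    set T : Finset (Fin d → ℝ) :=
      ((Finset.univ.image x) ∪ (Finset.univ.image y)).erase u with hT
    obtain ⟨f, hf1, hf0⟩ := exists_interp T u (Finset.notMem_erase u _)
    have hval : ∀ (z : Fin N → Fin d → ℝ),
        (∀ i, z i ∈ (Finset.univ.image x) ∪ (Finset.univ.image y)) →
        ∑ i, eval (z i) f = (Finset.univ.filter (fun i => z i = u)).card := by
      intro z hz
      have : ∀ i, eval (z i) f = if z i = u then (1 : ℝ) else 0 := by
        intro i
        by_cases hi : z i = u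
        · rw [if_pos hi, hi, hf1]
        · rw [if_neg hi]
          exact hf0 _ (Finset.mem_erase.mpr ⟨hi, hz i⟩)
      rw [Finset.sum_congr rfl (fun i _ => this i), Finset.sum_boole]
    have hx := hval x (fun i => Finset.mem_union_left _
      (Finset.mem_image_of_mem x (Finset.mem_univ i)))
    have hy := hval y (fun i => Finset.mem_union_right _
      (Finset.mem_image_of_mem y (Finset.mem_univ i)))
    have := hc f
    rw [hx, hy] at this
    exact_mod_cast this
  have e : ∀ u : Fin d → ℝ, {i // y i = u} ≃ {i // x i = u} := fun u =>
    Fintype.equivOfCardEq (by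
      simp only [Fintype.card_subtype]
      exact (hcount u).symm)
  refine ⟨(Equiv.ofFiberEquiv e).symm, funext fun i => ?_⟩
  show x (((Equiv.ofFiberEquiv e).symm)⁻¹ i) = y i
  rw [Equiv.Perm.inv_def, Equiv.symm_symm]
  exact Equiv.ofFiberEquiv_map e i

end DeepSetsAux

/-- Every continuous function `h` on a compact set `X` invariant under
permutations of the `N` training blocks, itself invariant under this action, admits for
every `ε > 0` a uniform DeepSets-style approximation `ρ(Σᵢ φ(uᵢ), V)` on `X`, where the
components of `φ : ℝ^d → ℝ^s` are monomial functions and `ρ` is a polynomial function. -/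
theorem deepsets_uniform_approximation
    (d N M : ℕ) (hd : 0 < d) (hN : 0 < N) (hM : 0 < M)
    (X : Set ((Fin N → Fin d → ℝ) × (Fin M → Fin d → ℝ)))
    (hXcomp : IsCompact X)
    (hXinv : ∀ π : Equiv.Perm (Fin N), ∀ x ∈ X, blockPerm d N M π x ∈ X)
    (h : (Fin N → Fin d → ℝ) × (Fin M → Fin d → ℝ) → ℝ)
    (hcont : ContinuousOn h X)
    (hinv : ∀ π : Equiv.Perm (Fin N), ∀ x ∈ X, h (blockPerm d N M π x) = h x) :
    ∀ ε : ℝ, 0 < ε →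
      ∃ (s : ℕ) (φ : (Fin d → ℝ) → Fin s → ℝ)
        (ρ : (Fin s → ℝ) × (Fin M → Fin d → ℝ) → ℝ),
        (∀ r : Fin s, ∃ α : Fin d → ℕ, ∀ u : Fin d → ℝ, φ u r = ∏ j, (u j) ^ (α j)) ∧
        IsPolyFunAgg d M s ρ ∧
        (∀ x ∈ X, |h x - ρ (fun r => ∑ i, φ (x.1 i) r, x.2)| ≤ ε) := by
  classical
  intro ε hε
  open DeepSetsAux in
  haveI : CompactSpace X := isCompact_iff_compactSpace.mp hXcomp
  have hlift : ∀ (a b : X), (DeepSetsAux.blockSetoid d N M X).r a b → h a.1 = h b.1 := by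
    rintro a b ⟨π, hπ⟩
    rw [← hπ, hinv π a.1 a.2]
  let hQ : C(Quotient (DeepSetsAux.blockSetoid d N M X), ℝ) :=
    ⟨Quotient.lift (fun x : X => h x.1) hlift,
      Continuous.quotient_lift (hcont.restrict) hlift⟩
  have hsep : (DeepSetsAux.algA d N M X).SeparatesPoints := by
    intro q1 q2 hq
    obtain ⟨a, rfl⟩ := Quotient.exists_rep q1
    obtain ⟨b, rfl⟩ := Quotient.exists_rep q2
    have hnr : ¬ (DeepSetsAux.blockSetoid d N M X).r a b := fun hr => hq (Quotient.sound hr)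
    by_cases hV : a.1.2 = b.1.2
    · have hne : ¬ ∃ π : Equiv.Perm (Fin N), (fun i => a.1.1 (π⁻¹ i)) = b.1.1 := by
        rintro ⟨π, hπ⟩
        exact hnr ⟨π, Prod.ext hπ hV⟩
      obtain ⟨f, hf⟩ := DeepSetsAux.exists_sep_poly a.1.1 b.1.1 hne
      exact ⟨⇑(DeepSetsAux.liftQ d N M X (DeepSetsAux.goodF_evalSum f)),
        ⟨DeepSetsAux.liftQ d N M X (DeepSetsAux.goodF_evalSum f),
          ⟨_, DeepSetsAux.goodF_evalSum f, rfl⟩, rfl⟩, hf⟩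
    · have : ∃ k j, a.1.2 k j ≠ b.1.2 k j := by
        by_contra hc
        push_neg at hc
        exact hV (funext fun k => funext fun j => hc k j)
      obtain ⟨k, j, hkj⟩ := this
      exact ⟨⇑(DeepSetsAux.liftQ d N M X (DeepSetsAux.goodF_coordV k j)),
        ⟨DeepSetsAux.liftQ d N M X (DeepSetsAux.goodF_coordV k j),
          ⟨_, DeepSetsAux.goodF_coordV k j, rfl⟩, rfl⟩, hkj⟩
  obtain ⟨g, hg⟩ := ContinuousMap.exists_mem_subalgebra_near_continuousMap_of_separatesPoints
    (DeepSetsAux.algA d N M X) hsep hQ ε hε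
  have hmem : ∃ F, ∃ hF : DeepSetsAux.GoodF d N M F,
      (g : C(Quotient (DeepSetsAux.blockSetoid d N M X), ℝ)) = DeepSetsAux.liftQ d N M X hF :=
    g.2
  obtain ⟨F, hF, hgF⟩ := hmem
  have hF' := hF
  obtain ⟨s, φ, ρ, hm, hpoly, he⟩ := hF'
  refine ⟨s, φ, ρ, hm, hpoly, fun x hx => ?_⟩
  have hval : (g : C(Quotient (DeepSetsAux.blockSetoid d N M X), ℝ))
      (Quotient.mk (DeepSetsAux.blockSetoid d N M X) ⟨x, hx⟩)
      = ρ (fun r => ∑ i, φ (x.1 i) r, x.2) := by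
    rw [hgF]
    exact he x
  have hQval : hQ (Quotient.mk (DeepSetsAux.blockSetoid d N M X) ⟨x, hx⟩) = h x := rfl
  have hb := ContinuousMap.norm_coe_le_norm
    ((g : C(Quotient (DeepSetsAux.blockSetoid d N M X), ℝ)) - hQ)
    (Quotient.mk (DeepSetsAux.blockSetoid d N M X) ⟨x, hx⟩)
  have h1 : |h x - ρ (fun r => ∑ i, φ (x.1 i) r, x.2)| ≤
      ‖(g : C(Quotient (DeepSetsAux.blockSetoid d N M X), ℝ)) - hQ‖ := by
    rw [← hval, ← hQval]
    simpa [abs_sub_comm, Real.norm_eq_abs] using hb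
  linarith
end
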